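/- For $\lambda_1,\lambda_2>0$ with $\lambda_1\neq\lambda_2$ and all $D\ge 0$: $1+\frac{\lambda_1}{\lambda_2-\lambda_1}e^{-\lambda_2 D}-\frac{\lambda_2}{\lambda_2-\lambda_1}e^{-\lambda_1 D}\le \frac{1}{2}\lambda_1\lambda_2 D^2$. -/

import Mathlib

/-!
The hypoexponential CDF `F` vanishes at `0` and has derivative
`F'(x) = λ₁λ₂ (e^{-λ₁x} - e^{-λ₂x}) / (λ₂ - λ₁)`. Since `exp` is `1`-Lipschitz on `(-∞, 0]`,
the divided difference is at most `x`, so `F'(x) ≤ λ₁λ₂ x`, the derivative of the Taylor term;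
integrating from `0` gives the bound.
-/

open Real Set

namespace Real

lemma exp_sub_exp_le_sub_of_le_of_nonpos {u v : ℝ} (huv : u ≤ v) (hv : v ≤ 0) :
    exp v - exp u ≤ v - u := by
  have hu : exp v * (1 - (v - u)) ≤ exp u := by
    calc exp v * (1 - (v - u)) ≤ exp v * exp (-(v - u)) :=
          mul_le_mul_of_nonneg_left (one_sub_le_exp_neg _) (exp_pos v).le
      _ = exp u := by rw [← exp_add]; ring_nf
  have hexp_v : exp v ≤ 1 := exp_le_one_iff.mpr hv
  nlinarith

lemma abs_exp_sub_exp_le_of_nonpos {u v : ℝ} (hu : u ≤ 0) (hv : v ≤ 0) :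
    |exp u - exp v| ≤ |u - v| := by
  rcases le_total u v with huv | hvu
  · rw [abs_sub_comm, abs_of_nonneg (sub_nonneg.mpr (exp_le_exp.mpr huv)), abs_sub_comm,
      abs_of_nonneg (sub_nonneg.mpr huv)]
    exact exp_sub_exp_le_sub_of_le_of_nonpos huv hv
  · rw [abs_of_nonneg (sub_nonneg.mpr (exp_le_exp.mpr hvu)), abs_of_nonneg (sub_nonneg.mpr hvu)]
    exact exp_sub_exp_le_sub_of_le_of_nonpos hvu hu

lemma exp_neg_mul_sub_exp_neg_mul_div_le {a b x : ℝ} (ha : 0 ≤ a) (hb : 0 ≤ b) (hx : 0 ≤ x) :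
    (exp (-(a * x)) - exp (-(b * x))) / (b - a) ≤ x := by
  have hlip : |exp (-(a * x)) - exp (-(b * x))| ≤ x * |b - a| := by
    calc |exp (-(a * x)) - exp (-(b * x))| ≤ |-(a * x) - -(b * x)| :=
          abs_exp_sub_exp_le_of_nonpos (by nlinarith) (by nlinarith)
      _ = x * |b - a| := by rw [show -(a * x) - -(b * x) = (b - a) * x by ring, abs_mul,
          abs_of_nonneg hx, mul_comm]
  calc (exp (-(a * x)) - exp (-(b * x))) / (b - a)
      ≤ |(exp (-(a * x)) - exp (-(b * x))) / (b - a)| := le_abs_self _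
    _ = |exp (-(a * x)) - exp (-(b * x))| / |b - a| := abs_div _ _
    _ ≤ x := div_le_of_le_mul₀ (abs_nonneg _) hx hlip

end Real

/-- Meaningful only for `l₁ ≠ l₂`: at `l₁ = l₂` division by zero makes it the constant `1`. -/
noncomputable def hypoexpCDF (l₁ l₂ x : ℝ) : ℝ :=
  1 + (l₁ / (l₂ - l₁)) * exp (-(l₂ * x)) - (l₂ / (l₂ - l₁)) * exp (-(l₁ * x))

lemma hypoexpCDF_zero {l₁ l₂ : ℝ} (hne : l₁ ≠ l₂) : hypoexpCDF l₁ l₂ 0 = 0 := by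
  have : l₂ - l₁ ≠ 0 := sub_ne_zero.mpr hne.symm
  simp only [hypoexpCDF, mul_zero, neg_zero, exp_zero, mul_one]
  field_simp
  ring

lemma hasDerivAt_exp_neg_mul (c x : ℝ) :
    HasDerivAt (fun x => exp (-(c * x))) (-c * exp (-(c * x))) x := by
  simpa [mul_comm] using ((hasDerivAt_id x).const_mul c).neg.exp

lemma hasDerivAt_hypoexpCDF (l₁ l₂ x : ℝ) :
    HasDerivAt (hypoexpCDF l₁ l₂)
      (l₁ * l₂ * ((exp (-(l₁ * x)) - exp (-(l₂ * x))) / (l₂ - l₁))) x := by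
  have := (((hasDerivAt_exp_neg_mul l₂ x).const_mul (l₁ / (l₂ - l₁))).const_add 1).sub
    ((hasDerivAt_exp_neg_mul l₁ x).const_mul (l₂ / (l₂ - l₁)))
  exact this.congr_deriv (by ring)

lemma hasDerivAt_half_mul_sq (c x : ℝ) :
    HasDerivAt (fun x => 1 / 2 * c * x ^ 2) (c * x) x :=
  ((hasDerivAt_pow 2 x).const_mul (1 / 2 * c)).congr_deriv (by ring)

theorem hypoexponential_cdf_le_taylor_bound
    (l₁ l₂ : ℝ) (hl₁ : 0 < l₁) (hl₂ : 0 < l₂) (hne : l₁ ≠ l₂)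
    (D : ℝ) (hD : 0 ≤ D) :
    1 + (l₁ / (l₂ - l₁)) * Real.exp (-(l₂ * D)) - (l₂ / (l₂ - l₁)) * Real.exp (-(l₁ * D))
      ≤ (1 / 2) * l₁ * l₂ * D ^ 2 := by
  have hderiv_le : ∀ x ∈ Ico 0 D,
      l₁ * l₂ * ((exp (-(l₁ * x)) - exp (-(l₂ * x))) / (l₂ - l₁)) ≤ l₁ * l₂ * x :=
    fun x hx => mul_le_mul_of_nonneg_left
      (exp_neg_mul_sub_exp_neg_mul_div_le hl₁.le hl₂.le hx.1) (mul_pos hl₁ hl₂).le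
  have hF_le_taylor := image_le_of_deriv_right_le_deriv_boundary (f := hypoexpCDF l₁ l₂)
    (B := fun x => 1 / 2 * (l₁ * l₂) * x ^ 2)
    (fun x _ => (hasDerivAt_hypoexpCDF l₁ l₂ x).continuousAt.continuousWithinAt)
    (fun x _ => (hasDerivAt_hypoexpCDF l₁ l₂ x).hasDerivWithinAt)
    (by simp [hypoexpCDF_zero hne])
    (fun x _ => (hasDerivAt_half_mul_sq _ x).continuousAt.continuousWithinAt)
    (fun x _ => (hasDerivAt_half_mul_sq _ x).hasDerivWithinAt)
    hderiv_le ⟨hD, le_rfl⟩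
  exact hF_le_taylor.trans_eq (by ring)
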